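/- Let X be a set of chords of the convex n-gon and suppose some vertex p is an endpoint of no chord of X. Then every triangulation avoiding X is joined, by a sequence of flips in which every intermediate triangulation avoids X, to the star triangulation at p; in particular F_{-X} is connected. -/

import Mathlib

/-!
Induct on the number of chords of `T` not incident to `p`. Take such a chord `e` of maximal span as
seen from `p`. The chord from `p` to the apex of the triangle of `T` on `e` facing `p` crosses
no chord of `T` other than `e`, so replacing `e` by it is a flip; the new chord contains `p`, hence
avoids `X`, and the count drops. When it reaches zero, all `n - 3` chords of `T` contain `p`, so
`T` is the star at `p`. Flips are symmetric, which gives connectivity.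
-/

namespace FlipCut

/-- `x` lies strictly inside the open cyclic arc from `a` to `b`
(going forward in the cyclic order on `ZMod n`). -/
def Btw (n : ℕ) (a x b : ZMod n) : Prop :=
  0 < (x - a).val ∧ (x - a).val < (b - a).val

/-- An unordered pair of vertices of the convex `n`-gon is a *chord*:
its two endpoints are distinct and not cyclically adjacent. -/
def IsChord (n : ℕ) (e : Sym2 (ZMod n)) : Prop :=
  ¬ e.IsDiag ∧ ∀ a ∈ e, ∀ b ∈ e, a ≠ b → b ≠ a + 1 ∧ b ≠ a - 1

/-- Two chords *cross*: they can be written as `{a, b}` and `{c, d}` where `c`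
lies strictly inside the open cyclic arc from `a` to `b` and `d` lies strictly
inside the open cyclic arc from `b` to `a` (i.e. the endpoint pairs separate
each other in the cyclic order, equivalently exactly one of `c, d` lies in the
open cyclic arc from `a` to `b`). -/
def Crosses (n : ℕ) (e f : Sym2 (ZMod n)) : Prop :=
  ∃ a b c d : ZMod n, e = s(a, b) ∧ f = s(c, d) ∧ Btw n a c b ∧ Btw n b d a

/-- A *triangulation* of the convex `n`-gon: a set of exactly `n - 3`
pairwise non-crossing chords. -/
def IsTriangulation (n : ℕ) (T : Finset (Sym2 (ZMod n))) : Prop :=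
  T.card = n - 3 ∧ (∀ e ∈ T, IsChord n e) ∧
    ∀ e ∈ T, ∀ f ∈ T, e ≠ f → ¬ Crosses n e f

/-- Triangulations `T` and `T'` differ by a *flip*: their symmetric difference
has exactly two chords. -/
def FlipAdj (n : ℕ) (T T' : Finset (Sym2 (ZMod n))) : Prop :=
  (symmDiff T T').card = 2

/-- `T` *avoids* `X`: `T` contains no chord of `X`. -/
def Avoids (n : ℕ) (T X : Finset (Sym2 (ZMod n))) : Prop :=
  ∀ e ∈ X, e ∉ T

/-- A vertex of the flip graph `F₋ₓ`: a triangulation avoiding `X`. -/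
def AvoidingTri (n : ℕ) (X T : Finset (Sym2 (ZMod n))) : Prop :=
  IsTriangulation n T ∧ Avoids n T X

/-- A single edge of the flip graph `F₋ₓ`: both endpoints are triangulations
avoiding `X` and they differ by a flip. -/
def FlipStep (n : ℕ) (X T T' : Finset (Sym2 (ZMod n))) : Prop :=
  AvoidingTri n X T ∧ AvoidingTri n X T' ∧ FlipAdj n T T'

/-- `S` and `T` are joined by a path in the flip graph `F₋ₓ`: a sequence of
flips in which every intermediate triangulation avoids `X`. -/
def FlipConn (n : ℕ) (X S T : Finset (Sym2 (ZMod n))) : Prop :=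
  Relation.ReflTransGen (FlipStep n X) S T

/-- The flip graph `F₋ₓ` is connected. -/
def FlipGraphConnected (n : ℕ) (X : Finset (Sym2 (ZMod n))) : Prop :=
  ∀ S T, AvoidingTri n X S → AvoidingTri n X T → FlipConn n X S T

/-- `X` is a *flip cut set*: a set of chords such that the flip graph `F₋ₓ`
is disconnected. -/
def IsFlipCutSet (n : ℕ) (X : Finset (Sym2 (ZMod n))) : Prop :=
  (∀ e ∈ X, IsChord n e) ∧ ¬ FlipGraphConnected n X


/-- The *star triangulation* at vertex `p`: its chords are exactly the pairs
`{p, q}` with `q ∉ {p - 1, p, p + 1}`. -/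
def starTri (n : ℕ) [NeZero n] (p : ZMod n) : Finset (Sym2 (ZMod n)) :=
  ((Finset.univ : Finset (ZMod n)).filter
      (fun q => q ≠ p - 1 ∧ q ≠ p ∧ q ≠ p + 1)).image (fun q => s(p, q))

section Polygon

open Finset

variable {n : ℕ}

lemma crosses_mk_iff {a b c d : ZMod n} :
    Crosses n s(a, b) s(c, d) ↔
      Btw n a c b ∧ Btw n b d a ∨ Btw n a d b ∧ Btw n b c a := by
  constructor
  · rintro ⟨a', b', c', d', he, hf, h₁, h₂⟩
    rcases Sym2.eq_iff.mp he with ⟨rfl, rfl⟩ | ⟨rfl, rfl⟩ <;>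
      rcases Sym2.eq_iff.mp hf with ⟨rfl, rfl⟩ | ⟨rfl, rfl⟩ <;> tauto
  · rintro (⟨h₁, h₂⟩ | ⟨h₁, h₂⟩)
    · exact ⟨a, b, c, d, rfl, rfl, h₁, h₂⟩
    · exact ⟨a, b, d, c, rfl, Sym2.eq_swap, h₁, h₂⟩

lemma natCast_ne_natCast {x y : ℕ} (hx : x < n) (hy : y < n) (hxy : x ≠ y) :
    (x : ZMod n) ≠ y := fun h =>
  hxy (by simpa [ZMod.val_cast_of_lt hx, ZMod.val_cast_of_lt hy] using congrArg ZMod.val h)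

/-- Vertices are read as offsets `(a - p).val ∈ [0, n)` from `p`; in these coordinates two chords
cross iff their intervals `[lo, hi]` interleave (`crosses_iff`). -/
def lo (p : ZMod n) : Sym2 (ZMod n) → ℕ :=
  Sym2.lift ⟨fun a b => min (a - p).val (b - p).val, fun _ _ => min_comm _ _⟩

def hi (p : ZMod n) : Sym2 (ZMod n) → ℕ :=
  Sym2.lift ⟨fun a b => max (a - p).val (b - p).val, fun _ _ => max_comm _ _⟩

lemma lo_le_hi (p : ZMod n) (e : Sym2 (ZMod n)) : lo p e ≤ hi p e := by
  induction e with | _ a b => exact min_le_max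

lemma lo_mk_add (p : ZMod n) {x y : ℕ} (hxy : x ≤ y) (hy : y < n) :
    lo p s(p + x, p + y) = x := by
  simp only [lo, Sym2.lift_mk, add_sub_cancel_left, ZMod.val_cast_of_lt hy,
    ZMod.val_cast_of_lt (hxy.trans_lt hy), min_eq_left hxy]

lemma hi_mk_add (p : ZMod n) {x y : ℕ} (hxy : x ≤ y) (hy : y < n) :
    hi p s(p + x, p + y) = y := by
  simp only [hi, Sym2.lift_mk, add_sub_cancel_left, ZMod.val_cast_of_lt hy,
    ZMod.val_cast_of_lt (hxy.trans_lt hy), max_eq_right hxy]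

lemma lo_mk_self_add (p : ZMod n) {x : ℕ} (hx : x < n) : lo p s(p, p + x) = 0 := by
  simpa using lo_mk_add p (Nat.zero_le x) hx

lemma hi_mk_self_add (p : ZMod n) {x : ℕ} (hx : x < n) : hi p s(p, p + x) = x := by
  simpa using hi_mk_add p (Nat.zero_le x) hx

lemma lo_eq_zero_iff {p : ZMod n} {e : Sym2 (ZMod n)} : lo p e = 0 ↔ p ∈ e := by
  induction e with | _ a b => ?_
  simp only [lo, Sym2.lift_mk, Sym2.mem_iff, Nat.min_eq_zero_iff, ZMod.val_eq_zero, sub_eq_zero]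
  exact or_congr eq_comm eq_comm

lemma flipAdj_insert_erase {T : Finset (Sym2 (ZMod n))} {e e' : Sym2 (ZMod n)} (he : e ∈ T)
    (he' : e' ∉ T) : FlipAdj n T (insert e' (T.erase e)) := by
  have hne : e ≠ e' := by rintro rfl; exact he' he
  have : symmDiff T (insert e' (T.erase e)) = {e, e'} := by
    ext g
    simp only [mem_symmDiff, mem_insert, mem_erase, mem_singleton]
    grind
  rw [FlipAdj, this, card_pair hne]

lemma exists_last_chord_from (T : Finset (Sym2 (ZMod n))) (p : ZMod n) {a b : ℕ}
    (hab : a + 2 ≤ b) :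
    ∃ x, a < x ∧ x < b ∧ (a + 1 < x → s(p + a, p + x) ∈ T) ∧
      ∀ t < b, s(p + a, p + t) ∈ T → t ≤ x := by
  obtain ⟨x, hxS, hxmax⟩ := exists_max_image {y ∈ Ioo a b | y = a + 1 ∨ s(p + a, p + y) ∈ T} id
    ⟨a + 1, by simp only [mem_filter, mem_Ioo, true_or, and_true]; omega⟩
  simp only [mem_filter, mem_Ioo] at hxS
  refine ⟨x, hxS.1.1, hxS.1.2, fun h => hxS.2.resolve_left h.ne', fun t htb ht => ?_⟩
  by_cases hat : a < t
  · exact hxmax t (mem_filter.mpr ⟨mem_Ioo.mpr ⟨hat, htb⟩, Or.inr ht⟩)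
  · omega

lemma isChord_mk_add (p : ZMod n) {x : ℕ} (hx : 2 ≤ x) (hxn : x + 2 ≤ n) :
    IsChord n s(p, p + x) := by
  have h₀ : (x : ZMod n) ≠ 0 := by
    exact_mod_cast natCast_ne_natCast (y := 0) (by omega) (by omega) (by omega)
  have h₁ : (x : ZMod n) ≠ 1 := by
    exact_mod_cast natCast_ne_natCast (y := 1) (by omega) (by omega) (by omega)
  have h₂ : (x : ZMod n) + 1 ≠ 0 := by
    exact_mod_cast natCast_ne_natCast (x := x + 1) (y := 0) (by omega) (by omega) (by omega)
  refine ⟨fun h => h₀ (by simpa using Sym2.mk_isDiag_iff.mp h), ?_⟩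
  intro a ha b hb hab
  rcases Sym2.mem_iff.mp ha with rfl | rfl <;> rcases Sym2.mem_iff.mp hb with rfl | rfl
  · exact absurd rfl hab
  · exact ⟨fun h => h₁ (by linear_combination h), fun h => h₂ (by linear_combination h)⟩
  · exact ⟨fun h => h₂ (by linear_combination -h), fun h => h₁ (by linear_combination -h)⟩
  · exact absurd rfl hab

instance (X : Finset (Sym2 (ZMod n))) : Std.Symm (FlipStep n X) where
  symm _ _ h := ⟨h.2.1, h.1, by rw [FlipAdj, symmDiff_comm]; exact h.2.2⟩

variable [NeZero n]

lemma val_sub_eq_ite (a b : ZMod n) :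
    (a - b).val = if b.val ≤ a.val then a.val - b.val else n + a.val - b.val := by
  split_ifs with h
  · exact ZMod.val_sub h
  · have hba : b - a ≠ 0 := fun h0 => h (by rw [sub_eq_zero.mp h0])
    rw [← neg_sub, ZMod.neg_val, if_neg hba, ZMod.val_sub (by omega)]
    have := ZMod.val_lt b
    omega

lemma btw_iff_of_base (q a x b : ZMod n) :
    Btw n a x b ↔
      (a - q).val < (x - q).val ∧ (x - q).val < (b - q).val ∨
      (b - q).val < (a - q).val ∧ (a - q).val < (x - q).val ∨
      (x - q).val < (b - q).val ∧ (b - q).val < (a - q).val := by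
  have hx : x - a = (x - q) - (a - q) := by ring
  have hb : b - a = (b - q) - (a - q) := by ring
  have := ZMod.val_lt (a - q)
  have := ZMod.val_lt (x - q)
  have := ZMod.val_lt (b - q)
  rw [Btw, hx, hb, val_sub_eq_ite (x - q), val_sub_eq_ite (b - q)]
  split_ifs <;> omega

lemma crosses_iff (p : ZMod n) (e f : Sym2 (ZMod n)) :
    Crosses n e f ↔
      lo p e < lo p f ∧ lo p f < hi p e ∧ hi p e < hi p f ∨
      lo p f < lo p e ∧ lo p e < hi p f ∧ hi p f < hi p e := by
  induction e with | _ a b => ?_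
  induction f with | _ c d => ?_
  simp only [crosses_mk_iff, btw_iff_of_base p, lo, hi, Sym2.lift_mk]
  omega

lemma crosses_comm {e f : Sym2 (ZMod n)} : Crosses n e f ↔ Crosses n f e := by
  rw [crosses_iff 0, crosses_iff 0]
  tauto

lemma mk_lo_hi (p : ZMod n) (e : Sym2 (ZMod n)) : s(p + lo p e, p + hi p e) = e := by
  induction e with | _ a b => ?_
  have ha : p + ((a - p).val : ZMod n) = a := by simp
  have hb : p + ((b - p).val : ZMod n) = b := by simp
  simp only [lo, hi, Sym2.lift_mk]
  rcases le_total (a - p).val (b - p).val with h | h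
  · rw [min_eq_left h, max_eq_right h, ha, hb]
  · rw [min_eq_right h, max_eq_left h, ha, hb, Sym2.eq_swap]

lemma hi_lt (p : ZMod n) (e : Sym2 (ZMod n)) : hi p e < n := by
  induction e with | _ a b => exact max_lt (ZMod.val_lt _) (ZMod.val_lt _)

lemma IsChord.lo_add_two_le_hi {p : ZMod n} {e : Sym2 (ZMod n)} (he : IsChord n e) :
    lo p e + 2 ≤ hi p e := by
  rw [← mk_lo_hi p e] at he
  obtain ⟨hdiag, hadj⟩ := he
  have hab : p + (lo p e : ZMod n) ≠ p + hi p e := fun h => hdiag (Sym2.mk_isDiag_iff.mpr h)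
  have hne : lo p e ≠ hi p e := fun h => hab (by rw [h])
  have hsucc : hi p e ≠ lo p e + 1 := fun h =>
    (hadj _ (Sym2.mem_mk_left _ _) _ (Sym2.mem_mk_right _ _) hab).1 (by rw [h]; push_cast; ring)
  have := lo_le_hi p e
  omega

lemma IsTriangulation.not_interleave {T : Finset (Sym2 (ZMod n))} (hT : IsTriangulation n T)
    (p : ZMod n) {e f : Sym2 (ZMod n)} (he : e ∈ T) (hf : f ∈ T) :
    ¬ (lo p e < lo p f ∧ lo p f < hi p e ∧ hi p e < hi p f) := fun h =>
  hT.2.2 e he f hf (by rintro rfl; omega) ((crosses_iff p e f).mpr (Or.inl h))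

lemma card_starTri (hn : 3 ≤ n) (p : ZMod n) : #(starTri n p) = n - 3 := by
  have h₁ : (1 : ZMod n) ≠ 0 := by
    exact_mod_cast natCast_ne_natCast (x := 1) (y := 0) (by omega) (by omega) (by omega)
  have h₂ : (2 : ZMod n) ≠ 0 := by
    exact_mod_cast natCast_ne_natCast (x := 2) (y := 0) (by omega) (by omega) (by omega)
  have hthree : #({p - 1, p, p + 1} : Finset (ZMod n)) = 3 :=
    card_eq_three.mpr ⟨_, _, _, fun h => h₁ (by linear_combination -h),
      fun h => h₂ (by linear_combination -h), fun h => h₁ (by linear_combination -h), rfl⟩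
  have hfilter : univ.filter (fun q => q ≠ p - 1 ∧ q ≠ p ∧ q ≠ p + 1) =
      ({p - 1, p, p + 1} : Finset (ZMod n))ᶜ := by
    ext q
    simp
  rw [starTri, card_image_of_injective _ fun _ _ => Sym2.congr_right.mp, hfilter, card_compl,
    ZMod.card, hthree]

lemma mem_starTri_of_mem {p : ZMod n} {e : Sym2 (ZMod n)} (he : IsChord n e) (hp : p ∈ e) :
    e ∈ starTri n p := by
  obtain ⟨q, rfl⟩ := Sym2.mem_iff_exists.mp hp
  have hpq : p ≠ q := fun h => he.1 (Sym2.mk_isDiag_iff.mpr h)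
  obtain ⟨hq₁, hq₂⟩ := he.2 p (Sym2.mem_mk_left _ _) q (Sym2.mem_mk_right _ _) hpq
  simp only [starTri, mem_image, mem_filter, mem_univ, true_and]
  exact ⟨q, ⟨hq₂, hpq.symm, hq₁⟩, rfl⟩

lemma IsTriangulation.eq_starTri (hn : 3 ≤ n) {p : ZMod n} {T : Finset (Sym2 (ZMod n))}
    (hT : IsTriangulation n T) (hp : ∀ e ∈ T, p ∈ e) : T = starTri n p :=
  eq_of_subset_of_card_le (fun e he => mem_starTri_of_mem (hT.2.1 e he) (hp e he))
    (by rw [card_starTri hn, hT.1])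

lemma IsTriangulation.insert_erase {T : Finset (Sym2 (ZMod n))} (hT : IsTriangulation n T)
    {e e' : Sym2 (ZMod n)} (he : e ∈ T) (he' : e' ∉ T) (hchord : IsChord n e')
    (hcross : ∀ f ∈ T, f ≠ e → ¬ Crosses n e' f) : IsTriangulation n (insert e' (T.erase e)) := by
  obtain ⟨hcard, hchords, hnc⟩ := hT
  refine ⟨?_, ?_, ?_⟩
  · have := card_pos.mpr ⟨e, he⟩
    rw [card_insert_of_notMem fun h => he' (mem_of_mem_erase h), card_erase_of_mem he]
    omega
  · intro f hf
    rcases mem_insert.mp hf with rfl | hf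
    · exact hchord
    · exact hchords f (mem_of_mem_erase hf)
  · intro f hf g hg hfg
    rcases mem_insert.mp hf with rfl | hfT <;> rcases mem_insert.mp hg with rfl | hgT
    · exact absurd rfl hfg
    · exact hcross g (mem_of_mem_erase hgT) (ne_of_mem_erase hgT)
    · rw [crosses_comm]; exact hcross f (mem_of_mem_erase hfT) (ne_of_mem_erase hfT)
    · exact hnc f (mem_of_mem_erase hfT) g (mem_of_mem_erase hgT) hfg

/-- The witness `x` is the apex of the triangle of `T` on `e` facing `p`; maximality of the span of
`e` is what rules out every other chord crossing `s(p, p + x)`. -/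
lemma IsTriangulation.exists_chord_crossing_only {T : Finset (Sym2 (ZMod n))}
    (hT : IsTriangulation n T) {p : ZMod n} {e : Sym2 (ZMod n)} (he : e ∈ T) (hpe : p ∉ e)
    (hmax : ∀ f ∈ T, p ∉ f → hi p f - lo p f ≤ hi p e - lo p e) :
    ∃ x : ℕ, 2 ≤ x ∧ x + 2 ≤ n ∧ s(p, p + x) ∉ T ∧ ∀ f ∈ T, f ≠ e → ¬ Crosses n s(p, p + x) f := by
  have ha : lo p e ≠ 0 := fun h => hpe (lo_eq_zero_iff.mp h)
  have hab := (hT.2.1 e he).lo_add_two_le_hi (p := p)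
  have hb := hi_lt p e
  obtain ⟨x, hax, hxb, hlast, hmaxx⟩ := exists_last_chord_from T p hab
  have hxn : x < n := by omega
  refine ⟨x, by omega, by omega, fun hx => ?_, fun f hf hfe hcross => ?_⟩
  · apply hT.not_interleave p hx he
    rw [lo_mk_self_add p hxn, hi_mk_self_add p hxn]
    omega
  rw [crosses_iff p, lo_mk_self_add p hxn, hi_mk_self_add p hxn] at hcross
  have hpf : p ∉ f := fun h => by rw [← lo_eq_zero_iff] at h; omega
  have hspan := hmax f hf hpf
  have hef := hT.not_interleave p hf he
  -- `f` either starts before `e` and is then longer, or starts where `e` does and is then `e` or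
  -- ends by the apex, or starts later and then crosses the chord of `T` from there to the apex.
  rcases lt_trichotomy (lo p f) (lo p e) with hlo | hlo | hlo
  · omega
  · rcases lt_or_ge (hi p f) (hi p e) with hhi | hhi
    · have := hmaxx _ hhi (by rw [← hlo, mk_lo_hi]; exact hf)
      omega
    · exact hfe (by rw [← mk_lo_hi p f, ← mk_lo_hi p e, hlo, show hi p f = hi p e by omega])
  · have hg := hlast (by omega)
    apply hT.not_interleave p hg hf
    rw [lo_mk_add p hax.le hxn, hi_mk_add p hax.le hxn]
    omega

lemma AvoidingTri.exists_flipStep {X T : Finset (Sym2 (ZMod n))} (hT : AvoidingTri n X T)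
    {p : ZMod n} (hp : ∀ e ∈ X, p ∉ e) (h : ∃ e ∈ T, p ∉ e) :
    ∃ T', FlipStep n X T T' ∧ #{e ∈ T' | p ∉ e} < #{e ∈ T | p ∉ e} := by
  obtain ⟨e, he, hmax⟩ := exists_max_image {e ∈ T | p ∉ e} (fun e => hi p e - lo p e)
    (by simpa [Finset.Nonempty] using h)
  rw [mem_filter] at he
  obtain ⟨x, hx, hxn, hxT, hcross⟩ :=
    hT.1.exists_chord_crossing_only he.1 he.2 fun f hf hpf => hmax f (mem_filter.mpr ⟨hf, hpf⟩)
  have hpx : p ∈ s(p, p + (x : ZMod n)) := Sym2.mem_mk_left _ _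
  refine ⟨insert s(p, p + x) (T.erase e), ⟨hT, ⟨?_, ?_⟩, flipAdj_insert_erase he.1 hxT⟩, ?_⟩
  · exact hT.1.insert_erase he.1 hxT (isChord_mk_add p hx hxn) hcross
  · intro f hfX hfT
    rcases mem_insert.mp hfT with rfl | hfT
    · exact hp _ hfX hpx
    · exact hT.2 f hfX (mem_of_mem_erase hfT)
  · rw [filter_insert, if_neg (not_not.mpr hpx), filter_erase]
    exact card_erase_lt_of_mem (mem_filter.mpr he)

theorem flipConn_starTri (hn : 3 ≤ n) {X : Finset (Sym2 (ZMod n))} {p : ZMod n}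
    (hp : ∀ e ∈ X, p ∉ e) {T : Finset (Sym2 (ZMod n))} (hT : AvoidingTri n X T) :
    FlipConn n X T (starTri n p) := by
  induction hk : #{e ∈ T | p ∉ e} using Nat.strong_induction_on generalizing T with
  | _ k ih =>
    by_cases h : ∃ e ∈ T, p ∉ e
    · obtain ⟨T', hstep, hlt⟩ := hT.exists_flipStep hp h
      exact .head hstep (ih _ (hk ▸ hlt) hstep.2.1 rfl)
    · push Not at h
      rw [hT.1.eq_starTri hn h]
      exact .refl

end Polygon

theorem flipConn_to_star_of_vertex_untouched_general (n : ℕ) [NeZero n] (hn : 3 ≤ n)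
    (X : Finset (Sym2 (ZMod n)))
    (p : ZMod n) (hp : ∀ e ∈ X, p ∉ e) :
    (∀ T, AvoidingTri n X T → FlipConn n X T (starTri n p)) ∧
      FlipGraphConnected n X :=
  ⟨fun _ hT => flipConn_starTri hn hp hT, fun _ _ hS hT =>
    (flipConn_starTri hn hp hS).trans (Std.Symm.symm _ _ (flipConn_starTri hn hp hT))⟩

/-- If some vertex `p` is an endpoint of no chord of `X`,
then every triangulation avoiding `X` is joined, by flips through
triangulations avoiding `X`, to the star triangulation at `p`; in particular
`F₋ₓ` is connected. -/
theorem flipConn_to_star_of_vertex_untouched (n : ℕ) [NeZero n] (hn : 3 ≤ n)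
    (X : Finset (Sym2 (ZMod n))) (hX : ∀ e ∈ X, IsChord n e)
    (p : ZMod n) (hp : ∀ e ∈ X, p ∉ e) :
    (∀ T, AvoidingTri n X T → FlipConn n X T (starTri n p)) ∧
      FlipGraphConnected n X :=
  flipConn_to_star_of_vertex_untouched_general n hn X p hp

end FlipCut
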